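/- arXiv:1710.08635 — 4 statements merged into one kernel-verified Lean document; each statement's English description precedes it below -/
import Mathlib

section
/- For all vectors a, b in ℝ^n and real p > 2, the function f(a) = (max(|a|² - 1, 0))^(p/2) satisfies the convexity (subgradient) inequality: (max(|a|² - 1, 0))^(p/2) ≥ (max(|b|² - 1, 0))^(p/2) + p · (max(|b|² - 1, 0))^(p/2 - 1) · ⟨b, a - b⟩, with the convention that (max(t,0))^(p/2-1) = 0 when t ≤ 0. -/
/-!
Writing `q = p / 2`, the function is `φ (‖a‖² - 1)` with `φ t = (max t 0) ^ q` convex and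
nondecreasing, `φ' t = q (max t 0) ^ (q - 1)`. Its tangent-line inequality at `s = ‖b‖² - 1` is
Bernoulli's inequality, and `2 ⟪b, a - b⟫ ≤ ‖a‖² - ‖b‖²` (the difference is `‖a - b‖²`) lets one
pass from the increment `t - s` to the inner product, since `φ' s ≥ 0`.
-/

open RealInnerProductSpace

namespace Real

theorem rpow_add_mul_rpow_sub_one_mul_sub_le {q : ℝ} (hq : 1 ≤ q) {x y : ℝ} (hx : 0 ≤ x)
    (hy : 0 < y) : y ^ q + q * y ^ (q - 1) * (x - y) ≤ x ^ q := by
  have hyq : 0 < y ^ q := rpow_pos_of_pos hy q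
  have bernoulli : 1 + q * (x / y - 1) ≤ x ^ q / y ^ q := by
    have h := one_add_mul_self_le_rpow_one_add (s := x / y - 1)
      (by linarith [div_nonneg hx hy.le]) hq
    rwa [add_sub_cancel, div_rpow hx hy.le] at h
  calc y ^ q + q * y ^ (q - 1) * (x - y) = (1 + q * (x / y - 1)) * y ^ q := by
        rw [rpow_sub_one hy.ne']; field_simp
    _ ≤ x ^ q / y ^ q * y ^ q := mul_le_mul_of_nonneg_right bernoulli hyq.le
    _ = x ^ q := div_mul_cancel₀ _ hyq.ne'

theorem max_zero_rpow_add_mul_rpow_sub_one_mul_sub_le {q : ℝ} (hq : 1 < q) (x y : ℝ) :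
    (max y 0) ^ q + q * (max y 0) ^ (q - 1) * (x - y) ≤ (max x 0) ^ q := by
  rcases le_or_gt y 0 with hy | hy
  · rw [max_eq_right hy, zero_rpow (by linarith), zero_rpow (by linarith)]
    simpa using rpow_nonneg (le_max_right x 0) q
  · rw [max_eq_left hy.le]
    calc y ^ q + q * y ^ (q - 1) * (x - y) ≤ y ^ q + q * y ^ (q - 1) * (max x 0 - y) := by
          gcongr; exact le_max_left x 0
      _ ≤ (max x 0) ^ q := rpow_add_mul_rpow_sub_one_mul_sub_le hq.le (le_max_right x 0) hy

end Real

theorem two_mul_inner_sub_le_norm_sq_sub_norm_sq {E : Type*} [NormedAddCommGroup E]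
    [InnerProductSpace ℝ E] (a b : E) : 2 * ⟪b, a - b⟫ ≤ ‖a‖ ^ 2 - ‖b‖ ^ 2 := by
  have h : ‖a‖ ^ 2 - ‖b‖ ^ 2 - 2 * ⟪b, a - b⟫ = ‖a - b‖ ^ 2 := by
    rw [norm_sub_sq_real, inner_sub_right, real_inner_self_eq_norm_sq, real_inner_comm]; ring
  linarith [sq_nonneg ‖a - b‖]

theorem stmt_0 (n : ℕ) (p : ℝ) (hp : 2 < p) (a b : EuclideanSpace ℝ (Fin n)) :
    (max (‖a‖ ^ 2 - 1) 0) ^ (p / 2) ≥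
      (max (‖b‖ ^ 2 - 1) 0) ^ (p / 2) +
        p * (max (‖b‖ ^ 2 - 1) 0) ^ (p / 2 - 1) * ⟪b, a - b⟫ := by
  set c := (max (‖b‖ ^ 2 - 1) 0) ^ (p / 2 - 1)
  have hc : 0 ≤ c := Real.rpow_nonneg (le_max_right _ 0) _
  have hinner : p * c * ⟪b, a - b⟫ ≤ p / 2 * c * ((‖a‖ ^ 2 - 1) - (‖b‖ ^ 2 - 1)) := by
    have h := mul_le_mul_of_nonneg_left (two_mul_inner_sub_le_norm_sq_sub_norm_sq a b)
      (by positivity : 0 ≤ p / 2 * c)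
    linarith
  have htangent := Real.max_zero_rpow_add_mul_rpow_sub_one_mul_sub_le (by linarith : 1 < p / 2)
    (‖a‖ ^ 2 - 1) (‖b‖ ^ 2 - 1)
  linarith
end

section
/- For all vectors a, b ∈ ℝ^n and real p > 2, the quantity φ(a,b) = ⟨(max(|a|²-1,0))^(p/2-1) a − (max(|b|²-1,0))^(p/2-1) b, a − b⟩ is nonnegative, where (max(t,0))^(p/2-1) is interpreted as 0 when t ≤ 0. -/
open RealInnerProductSpace

theorem stmt_3 (n : ℕ) (p : ℝ) (hp : 2 < p) (a b : EuclideanSpace ℝ (Fin n)) :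
    0 ≤ ⟪(max (‖a‖ ^ 2 - 1) 0) ^ (p / 2 - 1) • a -
          (max (‖b‖ ^ 2 - 1) 0) ^ (p / 2 - 1) • b, a - b⟫ := by
  set fa := (max (‖a‖ ^ 2 - 1) 0) ^ (p / 2 - 1) with hfa
  set fb := (max (‖b‖ ^ 2 - 1) 0) ^ (p / 2 - 1) with hfb
  have he : 0 ≤ p / 2 - 1 := by linarith
  have hfa0 : 0 ≤ fa := Real.rpow_nonneg (le_max_right _ _) _
  have hfb0 : 0 ≤ fb := Real.rpow_nonneg (le_max_right _ _) _
  have hmono : ∀ x y : ℝ, 0 ≤ x → x ≤ y →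
      (max (x ^ 2 - 1) 0) ^ (p / 2 - 1) ≤ (max (y ^ 2 - 1) 0) ^ (p / 2 - 1) := by
    intro x y hx hxy
    apply Real.rpow_le_rpow (le_max_right _ _) _ he
    exact max_le_max (by nlinarith) le_rfl
  have key : 0 ≤ (fa * ‖a‖ - fb * ‖b‖) * (‖a‖ - ‖b‖) := by
    rcases le_total ‖a‖ ‖b‖ with h | h
    · have h1 : fa ≤ fb := hmono _ _ (norm_nonneg a) h
      have : fa * ‖a‖ ≤ fb * ‖b‖ := mul_le_mul h1 h (norm_nonneg a) hfb0
      nlinarith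
    · have h1 : fb ≤ fa := hmono _ _ (norm_nonneg b) h
      have : fb * ‖b‖ ≤ fa * ‖a‖ := mul_le_mul h1 h (norm_nonneg b) hfa0
      nlinarith
  have hab : ⟪a, b⟫ ≤ ‖a‖ * ‖b‖ := real_inner_le_norm a b
  have hexp : ⟪fa • a - fb • b, a - b⟫ =
      fa * ‖a‖ ^ 2 + fb * ‖b‖ ^ 2 - (fa + fb) * ⟪a, b⟫ := by
    simp only [inner_sub_left, inner_sub_right, real_inner_smul_left,
      real_inner_self_eq_norm_sq, real_inner_comm a b]
    ring
  rw [hexp]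
  nlinarith [key]
end

section
/- Let p > 2 be real and a, b ∈ ℝ^n with |a| > 1 or |b| > 1. If ⟨(max(|a|²-1,0))^(p/2-1) a − (max(|b|²-1,0))^(p/2-1) b, a − b⟩ = 0, then a = b. In particular, in the definition (max(t,0))^(p/2-1) = 0 for t ≤ 0. -/
open RealInnerProductSpace

private lemma aux_stmt4 (n : ℕ) (p : ℝ) (hp : 2 < p) (a b : EuclideanSpace ℝ (Fin n))
    (hA : 1 < ‖a‖) (hBA : ‖b‖ ≤ ‖a‖)
    (h : ⟪(max (‖a‖ ^ 2 - 1) 0) ^ (p / 2 - 1) • a -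
          (max (‖b‖ ^ 2 - 1) 0) ^ (p / 2 - 1) • b, a - b⟫ = 0) :
    a = b := by
  set A := ‖a‖ with hAdef
  set B := ‖b‖ with hBdef
  set α := (max (A ^ 2 - 1) 0) ^ (p / 2 - 1) with hαdef
  set β := (max (B ^ 2 - 1) 0) ^ (p / 2 - 1) with hβdef
  have hexp : 0 < p / 2 - 1 := by linarith
  have hA0 : (0:ℝ) < A := by linarith
  have hB0 : (0:ℝ) ≤ B := norm_nonneg b
  have hA2 : (0:ℝ) < A ^ 2 - 1 := by nlinarith
  have hα : 0 < α := Real.rpow_pos_of_pos (lt_max_of_lt_left hA2) _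
  have hβ0 : 0 ≤ β := Real.rpow_nonneg (le_max_right _ _) _
  have hCS : ⟪a, b⟫ ≤ A * B := real_inner_le_norm a b
  have hexpand : α * A ^ 2 + β * B ^ 2 - (α + β) * ⟪a, b⟫ = 0 := by
    have := h
    simp only [inner_sub_left, inner_sub_right, real_inner_smul_left,
      real_inner_self_eq_norm_sq] at this
    rw [real_inner_comm a b, ← hAdef, ← hBdef] at this
    linarith
  rcases lt_or_eq_of_le hBA with hlt | heq
  · exfalso
    have h1 : β * B < α * A := by
      by_cases hB1 : 1 < B
      · have hβα : β < α := by
          apply Real.rpow_lt_rpow (le_max_right _ _) _ hexp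
          rw [max_lt_iff]
          constructor
          · have : B ^ 2 < A ^ 2 := by nlinarith
            rw [lt_max_iff]; left; linarith
          · rw [lt_max_iff]; left; linarith
        nlinarith
      · push_neg at hB1
        have : max (B ^ 2 - 1) 0 = 0 := by
          rw [max_eq_right]; nlinarith
        have hβ : β = 0 := by rw [hβdef, this, Real.zero_rpow hexp.ne']
        rw [hβ]; simpa using mul_pos hα hA0
    have h2 : (α + β) * ⟪a, b⟫ ≤ (α + β) * (A * B) :=
      mul_le_mul_of_nonneg_left hCS (by positivity)
    nlinarith [mul_pos (sub_pos.2 hlt) (sub_pos.2 h1)]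
  · have hβα : β = α := by rw [hβdef, hαdef, heq]
    have hinner : ⟪a, b⟫ = A * B := by
      rw [hβα] at hexpand
      have h3 : α * (A * B - ⟪a, b⟫) * 2 = 0 := by
        linear_combination hexpand - α * (B - A) * heq
      have h4 : α * (A * B - ⟪a, b⟫) = 0 := by linarith
      rcases mul_eq_zero.mp h4 with h5 | h5
      · exact absurd h5 hα.ne'
      · linarith
    have := inner_eq_norm_mul_iff_real.mp hinner
    rw [← hAdef, ← hBdef, heq] at this
    exact smul_right_injective _ (by positivity : (A:ℝ) ≠ 0) this

theorem stmt_4 (n : ℕ) (p : ℝ) (hp : 2 < p) (a b : EuclideanSpace ℝ (Fin n))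
    (hab : 1 < ‖a‖ ∨ 1 < ‖b‖)
    (h : ⟪(max (‖a‖ ^ 2 - 1) 0) ^ (p / 2 - 1) • a -
          (max (‖b‖ ^ 2 - 1) 0) ^ (p / 2 - 1) • b, a - b⟫ = 0) :
    a = b := by
  have h' : ⟪(max (‖b‖ ^ 2 - 1) 0) ^ (p / 2 - 1) • b -
      (max (‖a‖ ^ 2 - 1) 0) ^ (p / 2 - 1) • a, b - a⟫ = 0 := by
    rw [← neg_sub ((max (‖a‖ ^ 2 - 1) 0) ^ (p / 2 - 1) • a) ((max (‖b‖ ^ 2 - 1) 0) ^ (p / 2 - 1) • b),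
      ← neg_sub a b, inner_neg_neg]
    exact h
  rcases le_total ‖b‖ ‖a‖ with hle | hle
  · have hA : 1 < ‖a‖ := by rcases hab with h1 | h1 <;> linarith
    exact aux_stmt4 n p hp a b hA hle h
  · have hB : 1 < ‖b‖ := by rcases hab with h1 | h1 <;> linarith
    exact (aux_stmt4 n p hp b a hB hle h').symm
end

section
/- For real numbers s ≥ 1 and x, y ≥ 1: (1/2)(|x² − 1|^s + |y² − 1|^s) · (x − y)² + (1/2)(|x² − 1|^s − |y² − 1|^s) · (x² − y²) ≥ 0, with equality only when x = y, provided additionally x > 1 or y > 1. -/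
/-! With `a = |x² - 1|^s` and `b = |y² - 1|^s` the expression factors as `(x - y) (a x - b y)`.
For `x, y ≥ 1` this is `(x - y) (f x - f y)` with `f t = (t² - 1)^s t`, and `f` is strictly
increasing on `[1, ∞)`, so the product is nonnegative and vanishes only when `x = y`. -/

open Set

section StrictMonoOn

variable {R : Type*} [Ring R] [LinearOrder R] [IsStrictOrderedRing R] {f : R → R} {S : Set R}
  {x y : R}

theorem StrictMonoOn.sub_mul_sub_pos (hf : StrictMonoOn f S) (hx : x ∈ S) (hy : y ∈ S)
    (hxy : x ≠ y) : 0 < (x - y) * (f x - f y) := by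
  rcases hxy.lt_or_gt with h | h
  · exact mul_pos_of_neg_of_neg (sub_neg.2 h) (sub_neg.2 (hf hx hy h))
  · exact mul_pos (sub_pos.2 h) (sub_pos.2 (hf hy hx h))

theorem StrictMonoOn.sub_mul_sub_nonneg (hf : StrictMonoOn f S) (hx : x ∈ S) (hy : y ∈ S) :
    0 ≤ (x - y) * (f x - f y) := by
  rcases eq_or_ne x y with rfl | hxy
  · simp
  · exact (hf.sub_mul_sub_pos hx hy hxy).le

theorem StrictMonoOn.eq_of_sub_mul_sub_eq_zero (hf : StrictMonoOn f S) (hx : x ∈ S) (hy : y ∈ S)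
    (h : (x - y) * (f x - f y) = 0) : x = y := by
  by_contra hxy
  exact (hf.sub_mul_sub_pos hx hy hxy).ne' h

end StrictMonoOn

theorem strictMonoOn_sq_sub_one_rpow_mul {s : ℝ} (hs : 0 ≤ s) :
    StrictMonoOn (fun t : ℝ => (t ^ 2 - 1) ^ s * t) (Ici 1) := by
  intro u (hu : 1 ≤ u) v (hv : 1 ≤ v) huv
  have hu2 : 0 ≤ u ^ 2 - 1 := by nlinarith
  have hv2 : 0 < v ^ 2 - 1 := by nlinarith
  exact mul_lt_mul' (Real.rpow_le_rpow hu2 (by nlinarith) hs) huv (by linarith)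
    (Real.rpow_pos_of_pos hv2 s)

theorem stmt_6 (s x y : ℝ) (hs : 1 ≤ s) (hx : 1 ≤ x) (hy : 1 ≤ y) :
    0 ≤ (1 / 2) * (|x ^ 2 - 1| ^ s + |y ^ 2 - 1| ^ s) * (x - y) ^ 2 +
        (1 / 2) * (|x ^ 2 - 1| ^ s - |y ^ 2 - 1| ^ s) * (x ^ 2 - y ^ 2) ∧
    ((1 < x ∨ 1 < y) →
      (1 / 2) * (|x ^ 2 - 1| ^ s + |y ^ 2 - 1| ^ s) * (x - y) ^ 2 +
        (1 / 2) * (|x ^ 2 - 1| ^ s - |y ^ 2 - 1| ^ s) * (x ^ 2 - y ^ 2) = 0 →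
      x = y) := by
  have hf := strictMonoOn_sq_sub_one_rpow_mul (by linarith : (0 : ℝ) ≤ s)
  have hx' : x ∈ Ici (1 : ℝ) := hx
  have hy' : y ∈ Ici (1 : ℝ) := hy
  have hfactor : (1 / 2) * (|x ^ 2 - 1| ^ s + |y ^ 2 - 1| ^ s) * (x - y) ^ 2 +
        (1 / 2) * (|x ^ 2 - 1| ^ s - |y ^ 2 - 1| ^ s) * (x ^ 2 - y ^ 2) =
      (x - y) * ((x ^ 2 - 1) ^ s * x - (y ^ 2 - 1) ^ s * y) := by
    rw [abs_of_nonneg (by nlinarith : 0 ≤ x ^ 2 - 1), abs_of_nonneg (by nlinarith : 0 ≤ y ^ 2 - 1)]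
    ring
  rw [hfactor]
  exact ⟨hf.sub_mul_sub_nonneg hx' hy', fun _ h => hf.eq_of_sub_mul_sub_eq_zero hx' hy' h⟩
end
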